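/- Suppose v ∈ E⁰ and R is a congruence on G(E) such that (v, μ) ∈ R for some μ ≠ v but (v, 0) ∉ R. Then the set S = {μ ∈ G(E) | (v, μ) ∈ R} is an inverse subsemigroup of G(E), and every element of S has the form xpx⁻¹ or xp⁻¹x⁻¹ for paths x, p with s(x) = v and r(x) = s(p) = r(p). -/

import Mathlib

universe u

/-- A directed graph: vertices, edges, source and range maps. -/
structure DGraph : Type (u + 1) where
  V : Type u
  Ed : Type u
  src : Ed → V
  rng : Ed → V

/-- The end vertex of a list of edges started at `v` (ignoring composability). -/
def DGraph.ranAux (G : DGraph) : G.V → List G.Ed → G.V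
  | v, [] => v
  | _, e :: es => DGraph.ranAux G (G.rng e) es

/-- The edges `l` form a composable path starting at `v`. -/
def DGraph.Chain (G : DGraph) : G.V → List G.Ed → Prop
  | _, [] => True
  | v, e :: es => G.src e = v ∧ DGraph.Chain G (G.rng e) es

theorem DGraph.ranAux_append (G : DGraph) (v : G.V) (l1 l2 : List G.Ed) :
    G.ranAux v (l1 ++ l2) = G.ranAux (G.ranAux v l1) l2 := by
  induction l1 generalizing v with
  | nil => rfl
  | cons e es ih => exact ih (G.rng e)

theorem DGraph.chain_append (G : DGraph) {v : G.V} {l1 l2 : List G.Ed}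
    (h1 : G.Chain v l1) (h2 : G.Chain (G.ranAux v l1) l2) : G.Chain v (l1 ++ l2) := by
  induction l1 generalizing v with
  | nil => exact h2
  | cons e es ih => exact ⟨h1.1, ih h1.2 h2⟩

theorem DGraph.chain_append_right (G : DGraph) {v : G.V} {l1 l2 : List G.Ed}
    (h : G.Chain v (l1 ++ l2)) : G.Chain (G.ranAux v l1) l2 := by
  induction l1 generalizing v with
  | nil => exact h
  | cons e es ih => exact ih h.2

/-- A (finite, directed) path in the graph `G`: a start vertex together
with a composable list of edges. Vertices are the paths of length `0`. -/
structure GPath (G : DGraph.{u}) : Type u where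
  start : G.V
  edges : List G.Ed
  chain : G.Chain start edges

namespace GPath

variable {G : DGraph}

/-- The range (end vertex) of a path. -/
def ran (p : GPath G) : G.V := G.ranAux p.start p.edges

/-- The path of length zero at a vertex. -/
def ofVertex (G : DGraph) (v : G.V) : GPath G := ⟨v, [], trivial⟩

/-- The path of length one given by an edge. -/
def ofEdge (G : DGraph) (e : G.Ed) : GPath G := ⟨G.src e, [e], ⟨rfl, trivial⟩⟩

@[simp] theorem ofVertex_ran (G : DGraph) (v : G.V) : (ofVertex G v).ran = v := rfl

@[simp] theorem ofEdge_ran (G : DGraph) (e : G.Ed) : (ofEdge G e).ran = G.rng e := rfl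

/-- Concatenation of composable paths. -/
def append (p q : GPath G) (h : p.ran = q.start) : GPath G :=
  ⟨p.start, p.edges ++ q.edges,
    G.chain_append p.chain (by
      show G.Chain (G.ranAux p.start p.edges) q.edges
      have : G.ranAux p.start p.edges = q.start := h
      rw [this]; exact q.chain)⟩

@[simp] theorem append_ran (p q : GPath G) (h : p.ran = q.start) :
    (p.append q h).ran = q.ran := by
  show G.ranAux p.start (p.edges ++ q.edges) = q.ran
  rw [G.ranAux_append]
  have : G.ranAux p.start p.edges = q.start := h
  rw [this]; rfl

/-- `y` is an initial segment of the path `p`. -/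
def IsPrefixOf (y p : GPath G) : Prop := y.start = p.start ∧ y.edges <+: p.edges

/-- The remainder `t` of `p` after its initial segment `y`, so that `p = y ++ t`. -/
def remainder (y p : GPath G) (h : y.IsPrefixOf p) : GPath G :=
  ⟨y.ran, p.edges.drop y.edges.length, by
    obtain ⟨l2, hl⟩ := h.2
    rw [← hl, List.drop_left]
    show G.Chain (G.ranAux y.start y.edges) l2
    rw [h.1]
    exact G.chain_append_right (v := p.start) (l1 := y.edges) (l2 := l2)
      (by rw [hl]; exact p.chain)⟩

@[simp] theorem remainder_ran (y p : GPath G) (h : y.IsPrefixOf p) :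
    (y.remainder p h).ran = p.ran := by
  obtain ⟨l2, hl⟩ := h.2
  show G.ranAux y.ran (p.edges.drop y.edges.length) = p.ran
  rw [← hl, List.drop_left]
  show G.ranAux (G.ranAux y.start y.edges) l2 = p.ran
  rw [h.1, ← G.ranAux_append, hl]
  rfl

end GPath

/-- The graph inverse semigroup of `G` (in normal form): its elements are zero together
with the elements `x * y⁻¹` for paths `x`, `y` with the same range. -/
inductive GIS (G : DGraph.{u}) : Type u where
  | zero : GIS G
  | mk (x y : GPath G) (h : x.ran = y.ran) : GIS G

instance (G : DGraph) : Zero (GIS G) := ⟨GIS.zero⟩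

open scoped Classical in
/-- Multiplication in the graph inverse semigroup. -/
noncomputable def GIS.gmul {G : DGraph} : GIS G → GIS G → GIS G
  | GIS.zero, _ => GIS.zero
  | GIS.mk _ _ _, GIS.zero => GIS.zero
  | GIS.mk x y hxy, GIS.mk p q hpq =>
    if h1 : y.IsPrefixOf p then
      GIS.mk (x.append (y.remainder p h1) hxy) q
        (by exact (GPath.append_ran _ _ _).trans ((GPath.remainder_ran _ _ _).trans hpq))
    else if h2 : p.IsPrefixOf y then
      GIS.mk x (q.append (p.remainder y h2) hpq.symm)
        (by exact ((GPath.append_ran _ _ _).trans ((GPath.remainder_ran _ _ _).trans hxy.symm)).symm)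
    else GIS.zero

noncomputable instance (G : DGraph) : Mul (GIS G) := ⟨GIS.gmul⟩

/-- The element of `GIS G` corresponding to a vertex `v` (i.e. `v = v * v⁻¹`). -/
def vertexEl (G : DGraph) (v : G.V) : GIS G :=
  GIS.mk (GPath.ofVertex G v) (GPath.ofVertex G v) rfl

/-- The element of `GIS G` corresponding to an edge `e` (i.e. `e = e * r(e)⁻¹`). -/
def edgeEl (G : DGraph) (e : G.Ed) : GIS G :=
  GIS.mk (GPath.ofEdge G e) (GPath.ofVertex G (G.rng e)) rfl

/-- The inverse operation on `GIS G`: `(x y⁻¹)⁻¹ = y x⁻¹`. -/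
def GIS.inv {G : DGraph} : GIS G → GIS G
  | GIS.zero => GIS.zero
  | GIS.mk x y h => GIS.mk y x h.symm

/-- `a` lies in the principal left ideal generated by `b` (`S¹a ⊆ S¹b`). -/
def GreenLeL {G : DGraph} (a b : GIS G) : Prop := a = b ∨ ∃ c, a = c * b

/-- `a` lies in the principal right ideal generated by `b` (`aS¹ ⊆ bS¹`). -/
def GreenLeR {G : DGraph} (a b : GIS G) : Prop := a = b ∨ ∃ c, a = b * c

/-- `a` lies in the principal two-sided ideal generated by `b` (`S¹aS¹ ⊆ S¹bS¹`). -/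
def GreenLeJ {G : DGraph} (a b : GIS G) : Prop :=
  a = b ∨ (∃ c, a = c * b) ∨ (∃ c, a = b * c) ∨ (∃ c d, a = c * b * d)

/-- Green's `L`-relation. -/
def GreenEqL {G : DGraph} (a b : GIS G) : Prop := GreenLeL a b ∧ GreenLeL b a

/-- Green's `R`-relation. -/
def GreenEqR {G : DGraph} (a b : GIS G) : Prop := GreenLeR a b ∧ GreenLeR b a

/-- Green's `J`-relation. -/
def GreenEqJ {G : DGraph} (a b : GIS G) : Prop := GreenLeJ a b ∧ GreenLeJ b a

/-- There is a (possibly trivial) directed path from `v` to `w` in `G`. -/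
def GConnected (G : DGraph) (v w : G.V) : Prop := ∃ t : GPath G, t.start = v ∧ t.ran = w

/-- `I` is a (two-sided) ideal of `GIS G`. -/
def GISIdeal {G : DGraph} (I : Set (GIS G)) : Prop :=
  ∀ a ∈ I, ∀ c : GIS G, a * c ∈ I ∧ c * a ∈ I

/-- `R` is the Rees congruence of some ideal `I`, i.e. `R = (I × I) ∪ Δ`. -/
def IsReesCon {G : DGraph} (R : Con (GIS G)) : Prop :=
  ∃ I : Set (GIS G), GISIdeal I ∧ ∀ a b : GIS G, R a b ↔ (a ∈ I ∧ b ∈ I) ∨ a = b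

/-- The only congruences on `GIS G` are the universal one and the diagonal. -/
def CongFree (G : DGraph) : Prop :=
  ∀ R : Con (GIS G), (∀ a b : GIS G, R a b) ∨ (∀ a b : GIS G, R a b ↔ a = b)

/-- The natural partial order on the inverse semigroup `GIS G`:
`a ≤ b` iff `a = ε * b` for some idempotent `ε`. -/
def natLe {G : DGraph} (a b : GIS G) : Prop := ∃ ε : GIS G, ε * ε = ε ∧ a = ε * b

/-- The graph obtained from `G` by deleting the vertices in `S` and all
edges incident to them. -/
def DGraph.delete (G : DGraph) (S : Set G.V) : DGraph where
  V := {v : G.V // v ∉ S}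
  Ed := {e : G.Ed // G.src e ∉ S ∧ G.rng e ∉ S}
  src e := ⟨G.src e.1, e.2.1⟩
  rng e := ⟨G.rng e.1, e.2.2⟩

/-- The graph with a single vertex and `n` loops; its graph inverse semigroup
is the polycyclic monoid `Pₙ`. -/
def polyGraph (n : ℕ) : DGraph :=
  ⟨PUnit, Fin n, fun _ => PUnit.unit, fun _ => PUnit.unit⟩

/-! Since `v` is idempotent, the `R`-class of `v` is closed under products; it cannot
contain `0`, so each `x y⁻¹ ∈ S` has `s(x) = s(y) = v` (otherwise `v · x y⁻¹` or `x y⁻¹ · v`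
vanishes) and `(x y⁻¹)² ≠ 0` forces one of `x`, `y` to be a prefix of the other, which is the
stated normal form. Closure under inverses comes from
`(x y⁻¹)⁻¹ = v (x y⁻¹)⁻¹ R (x y⁻¹)(x y⁻¹)⁻¹ = x x⁻¹ = x x⁻¹ v R x x⁻¹ (x y⁻¹) = x y⁻¹ R v`. -/

theorem Con.rel_mul_of_mul_self {M : Type*} [Mul M] (R : Con M) {e a b : M}
    (he : e * e = e) (ha : R e a) (hb : R e b) : R e (a * b) :=
  he ▸ R.mul ha hb

namespace GPath

variable {G : DGraph}

theorem ext {p q : GPath G} (hs : p.start = q.start) (he : p.edges = q.edges) : p = q := by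
  cases p; cases q; cases hs; cases he; rfl

theorem isPrefixOf_refl (p : GPath G) : p.IsPrefixOf p := ⟨rfl, List.prefix_rfl⟩

theorem append_remainder (y p : GPath G) (h : y.IsPrefixOf p) :
    y.append (y.remainder p h) rfl = p := by
  refine ext h.1 ?_
  obtain ⟨l, hl⟩ := h.2
  show y.edges ++ p.edges.drop y.edges.length = p.edges
  rw [← hl, List.drop_left]

theorem append_remainder_self (x y : GPath G) (h : y.IsPrefixOf y) (hx : x.ran = y.ran) :
    x.append (y.remainder y h) hx = x :=
  ext rfl (by simp [append, remainder])

theorem IsPrefixOf.exists_append {y p : GPath G} (h : y.IsPrefixOf p) :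
    ∃ (t : GPath G) (ht : y.ran = t.start), p = y.append t ht :=
  ⟨y.remainder p h, rfl, (append_remainder y p h).symm⟩

end GPath

namespace GIS

variable {G : DGraph}

theorem mk_mul_mk_of_isPrefixOf {x y p q : GPath G} (hxy : x.ran = y.ran) (hpq : p.ran = q.ran)
    (h : y.IsPrefixOf p) :
    mk x y hxy * mk p q hpq = mk (x.append (y.remainder p h) hxy) q
      ((GPath.append_ran _ _ _).trans ((GPath.remainder_ran _ _ _).trans hpq)) :=
  dif_pos h

theorem mk_mul_mk_of_isPrefixOf' {x y p q : GPath G} (hxy : x.ran = y.ran) (hpq : p.ran = q.ran)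
    (hy : ¬ y.IsPrefixOf p) (hp : p.IsPrefixOf y) :
    mk x y hxy * mk p q hpq = mk x (q.append (p.remainder y hp) hpq.symm)
      ((GPath.append_ran _ _ _).trans ((GPath.remainder_ran _ _ _).trans hxy.symm)).symm :=
  (dif_neg hy).trans (dif_pos hp)

theorem mk_mul_mk_eq_zero {x y p q : GPath G} (hxy : x.ran = y.ran) (hpq : p.ran = q.ran)
    (hy : ¬ y.IsPrefixOf p) (hp : ¬ p.IsPrefixOf y) : mk x y hxy * mk p q hpq = 0 :=
  (dif_neg hy).trans (dif_neg hp)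

theorem mk_mul_mk_inv (p q : GPath G) (hpq : p.ran = q.ran) :
    mk p q hpq * mk q p hpq.symm = mk p p rfl := by
  rw [mk_mul_mk_of_isPrefixOf _ _ (GPath.isPrefixOf_refl q)]
  congr 1
  exact GPath.append_remainder_self _ _ _ _

theorem mk_self_mul_mk (p q : GPath G) (hpq : p.ran = q.ran) :
    mk p p rfl * mk p q hpq = mk p q hpq := by
  rw [mk_mul_mk_of_isPrefixOf _ _ (GPath.isPrefixOf_refl p)]
  congr 1
  exact GPath.append_remainder_self _ _ _ _

theorem isPrefixOf_or_of_mk_mul_self_ne_zero {p q : GPath G} (hpq : p.ran = q.ran)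
    (h : mk p q hpq * mk p q hpq ≠ 0) : q.IsPrefixOf p ∨ p.IsPrefixOf q := by
  by_contra hc
  exact h (mk_mul_mk_eq_zero hpq hpq (fun h' => hc (.inl h')) (fun h' => hc (.inr h')))

end GIS

section vertexEl

open GIS GPath

variable {G : DGraph} {v : G.V}

theorem vertexEl_mul_mk {p q : GPath G} (hpq : p.ran = q.ran) (hp : p.start = v) :
    vertexEl G v * mk p q hpq = mk p q hpq := by
  rw [vertexEl, mk_mul_mk_of_isPrefixOf _ _ ⟨hp.symm, List.nil_prefix⟩]
  congr 1
  exact append_remainder _ _ _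

theorem mk_mul_vertexEl {p q : GPath G} (hpq : p.ran = q.ran) (hq : q.start = v) :
    mk p q hpq * vertexEl G v = mk p q hpq := by
  by_cases he : q.edges = []
  · obtain rfl : q = ofVertex G v := ext hq he
    rw [vertexEl, mk_mul_mk_of_isPrefixOf _ _ (isPrefixOf_refl _)]
    congr 1
    exact append_remainder_self _ _ _ _
  · have hq' : ¬ q.IsPrefixOf (ofVertex G v) := fun h => he (List.prefix_nil.mp h.2)
    rw [vertexEl, mk_mul_mk_of_isPrefixOf' _ _ hq' ⟨hq.symm, List.nil_prefix⟩]
    congr 1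
    exact append_remainder _ _ _

theorem vertexEl_mul_self (v : G.V) : vertexEl G v * vertexEl G v = vertexEl G v :=
  vertexEl_mul_mk rfl rfl

theorem vertexEl_mul_mk_eq_zero {p q : GPath G} (hpq : p.ran = q.ran) (hp : p.start ≠ v) :
    vertexEl G v * mk p q hpq = 0 :=
  mk_mul_mk_eq_zero rfl hpq (fun h => hp h.1.symm) (fun h => hp h.1)

theorem mk_mul_vertexEl_eq_zero {p q : GPath G} (hpq : p.ran = q.ran) (hq : q.start ≠ v) :
    mk p q hpq * vertexEl G v = 0 :=
  mk_mul_mk_eq_zero hpq rfl (fun h => hq h.1) (fun h => hq h.1.symm)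

end vertexEl

section Congruence

open GIS

variable {G : DGraph} {R : Con (GIS G)} {v : G.V}

theorem start_eq_of_rel_vertexEl (h0 : ¬ R (vertexEl G v) 0) {p q : GPath G}
    {hpq : p.ran = q.ran} (h : R (vertexEl G v) (mk p q hpq)) : p.start = v ∧ q.start = v := by
  constructor
  · by_contra hp
    have := R.mul (R.refl (vertexEl G v)) h
    rw [vertexEl_mul_self, vertexEl_mul_mk_eq_zero hpq hp] at this
    exact h0 this
  · by_contra hq
    have := R.mul h (R.refl (vertexEl G v))
    rw [vertexEl_mul_self, mk_mul_vertexEl_eq_zero hpq hq] at this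
    exact h0 this

theorem rel_vertexEl_inv (h0 : ¬ R (vertexEl G v) 0) {a : GIS G} (h : R (vertexEl G v) a) :
    R (vertexEl G v) a.inv := by
  cases a with
  | zero => exact absurd h h0
  | mk p q hpq =>
    obtain ⟨hp, hq⟩ := start_eq_of_rel_vertexEl h0 h
    have hinv : R (mk q p hpq.symm) (mk p p rfl) := by
      simpa only [vertexEl_mul_mk _ hq, mk_mul_mk_inv] using R.mul h (R.refl (mk q p hpq.symm))
    have hidem : R (mk p p rfl) (mk p q hpq) := by
      simpa only [mk_mul_vertexEl _ hp, mk_self_mul_mk] using R.mul (R.refl (mk p p rfl)) h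
    exact R.trans h (R.symm (R.trans hinv hidem))

theorem exists_path_form_of_rel_vertexEl (h0 : ¬ R (vertexEl G v) 0) {a : GIS G}
    (h : R (vertexEl G v) a) :
    ∃ (x p : GPath G) (_ : x.start = v) (hp : x.ran = p.start) (_ : p.ran = x.ran)
      (hm : (x.append p hp).ran = x.ran),
      a = mk (x.append p hp) x hm ∨ a = mk x (x.append p hp) hm.symm := by
  cases a with
  | zero => exact absurd h h0
  | mk p q hpq =>
    obtain ⟨hp, hq⟩ := start_eq_of_rel_vertexEl h0 h
    have hsq : mk p q hpq * mk p q hpq ≠ 0 := fun hz =>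
      h0 (hz ▸ R.rel_mul_of_mul_self (vertexEl_mul_self v) h h)
    rcases isPrefixOf_or_of_mk_mul_self_ne_zero hpq hsq with hqp | hpq'
    · obtain ⟨t, ht, rfl⟩ := hqp.exists_append
      exact ⟨q, t, hq, ht, (GPath.append_ran _ _ _).symm.trans hpq, hpq, Or.inl rfl⟩
    · obtain ⟨t, ht, rfl⟩ := hpq'.exists_append
      exact ⟨p, t, hp, ht, (GPath.append_ran _ _ _).symm.trans hpq.symm, hpq.symm, Or.inr rfl⟩

end Congruence

theorem stmt12_general (G : DGraph) (R : Con (GIS G)) (v : G.V)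
    (h2 : ¬ R (vertexEl G v) 0) :
    (∀ mu nu : GIS G, R (vertexEl G v) mu → R (vertexEl G v) nu →
      R (vertexEl G v) (mu * nu)) ∧
    (∀ mu : GIS G, R (vertexEl G v) mu → R (vertexEl G v) mu.inv) ∧
    (∀ mu : GIS G, R (vertexEl G v) mu →
      ∃ (x p : GPath G) (hx : x.start = v) (hp : x.ran = p.start) (hpr : p.ran = x.ran)
        (hm : (x.append p hp).ran = x.ran),
        mu = GIS.mk (x.append p hp) x hm ∨ mu = GIS.mk x (x.append p hp) hm.symm) :=
  ⟨fun _ _ => R.rel_mul_of_mul_self (vertexEl_mul_self v),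
    fun _ => rel_vertexEl_inv h2,
    fun _ => exists_path_form_of_rel_vertexEl h2⟩

/-- If `v ∈ E⁰` and `R` is a congruence on `G(E)` with `(v, μ) ∈ R` for
some `μ ≠ v` but `(v, 0) ∉ R`, then `S = {μ | (v, μ) ∈ R}` is an inverse subsemigroup of
`G(E)`, and every element of `S` has the form `x p x⁻¹` or `x p⁻¹ x⁻¹` for paths `x, p`
with `s(x) = v` and `r(x) = s(p) = r(p)`. -/
theorem stmt12 (G : DGraph) (R : Con (GIS G)) (v : G.V)
    (h1 : ∃ mu : GIS G, mu ≠ vertexEl G v ∧ R (vertexEl G v) mu)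
    (h2 : ¬ R (vertexEl G v) 0) :
    (∀ mu nu : GIS G, R (vertexEl G v) mu → R (vertexEl G v) nu →
      R (vertexEl G v) (mu * nu)) ∧
    (∀ mu : GIS G, R (vertexEl G v) mu → R (vertexEl G v) mu.inv) ∧
    (∀ mu : GIS G, R (vertexEl G v) mu →
      ∃ (x p : GPath G) (hx : x.start = v) (hp : x.ran = p.start) (hpr : p.ran = x.ran)
        (hm : (x.append p hp).ran = x.ran),
        mu = GIS.mk (x.append p hp) x hm ∨ mu = GIS.mk x (x.append p hp) hm.symm) :=
  stmt12_general G R v h2
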